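/- arXiv:alg-geom/9604017 — 3 statements merged into one kernel-verified Lean document; each statement's English description precedes it below -/
import Mathlib

section
/- Let d₁ | d₂ | ... | d_g be positive integers with g ≥ 3, all d_i even, and let ℤ_D = ℤ/d₁ℤ ⊕ ... ⊕ ℤ/d_gℤ. Then every group automorphism of ℤ_D induces an even permutation of the underlying finite set, i.e. its sign as a permutation is +1. -/
open Equiv Finset

namespace SignZD

variable {g : ℕ}

lemma zmod2_cases : ∀ v : ZMod 2, v = 0 ∨ v = 1 := by decide

lemma zmod2_add_self : ∀ v : ZMod 2, v + v = 0 := by decide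

lemma exists_third (hg : 3 ≤ g) (i j : Fin g) : ∃ l : Fin g, l ≠ i ∧ l ≠ j := by
  by_contra h
  push_neg at h
  have hsub : (Finset.univ : Finset (Fin g)) ⊆ {i, j} := by
    intro l _
    simp only [Finset.mem_insert, Finset.mem_singleton]
    rcases eq_or_ne l i with h' | h'
    · exact Or.inl h'
    · exact Or.inr (h l h')
  have h1 := Finset.card_le_card hsub
  have h2 : ({i, j} : Finset (Fin g)).card ≤ 2 :=
    (Finset.card_insert_le _ _).trans (by simp)
  simp only [Finset.card_univ, Fintype.card_fin] at h1
  omega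

lemma sign_addRight_zmod2 (v : ZMod 2) :
    Equiv.Perm.sign (Equiv.addRight v) = if v = 0 then 1 else -1 := by
  rcases zmod2_cases v with rfl | rfl
  · have : (Equiv.addRight (0 : ZMod 2)) = 1 := by
      ext x; simp
    rw [this, map_one]
    simp
  · have : (Equiv.addRight (1 : ZMod 2)) = Equiv.swap 0 1 := by
      ext x; revert x; decide
    rw [this]
    simp [Equiv.Perm.sign_swap (by decide : (0 : ZMod 2) ≠ 1)]

/-- Core lemma: a permutation of `F₂^g` modifying a single coordinate `i` by a
function not depending on coordinate `i` and invariant under toggling some other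
coordinate `l` is even. -/
lemma sign_single_modify (i : Fin g) (F : (Fin g → ZMod 2) → ZMod 2)
    (f : Equiv.Perm (Fin g → ZMod 2)) (hf : ∀ x, f x = x + Pi.single i (F x))
    (hdep : ∀ x v, F (Function.update x i v) = F x)
    (l : Fin g) (hl : l ≠ i) (hinv : ∀ x, F (x + Pi.single l 1) = F x) :
    Equiv.Perm.sign f = 1 := by
  classical
  set E := Equiv.funSplitAt i (ZMod 2) with hE
  have hEapp : ∀ y : Fin g → ZMod 2, E y = (y i, fun j : {j // j ≠ i} => y j.1) :=
    fun y => rfl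
  have hupdate : ∀ (x : Fin g → ZMod 2) (v : ZMod 2),
      E.symm (v, (E x).2) = Function.update x i v := by
    intro x v
    apply E.injective
    rw [Equiv.apply_symm_apply, hEapp, hEapp]
    refine Prod.ext ?_ ?_
    · simp [Function.update_self]
    · funext j
      simp [Function.update_of_ne j.2]
  have hsign := Equiv.Perm.sign_symm_trans_trans f E
  rw [← hsign]
  have key : (E.symm.trans f).trans E
      = Equiv.prodCongrLeft (fun r : {j // j ≠ i} → ZMod 2 =>
          Equiv.addRight (F (E.symm (0, r)))) := by
    apply Equiv.ext
    rintro ⟨a, r⟩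
    set x := E.symm (a, r) with hx
    have hxi : x i = a := by
      have := Equiv.apply_symm_apply E (a, r)
      rw [hEapp] at this
      exact congrArg Prod.fst this
    have hxr : (fun j : {j // j ≠ i} => x j.1) = r := by
      have := Equiv.apply_symm_apply E (a, r)
      rw [hEapp] at this
      exact congrArg Prod.snd this
    have hFx : F (E.symm (0, r)) = F x := by
      have h1 : E.symm (0, (E x).2) = Function.update x i 0 := hupdate x 0
      have h2 : (E x).2 = r := by rw [hEapp]; exact hxr
      rw [h2] at h1
      rw [h1, hdep]
    simp only [Equiv.trans_apply, Equiv.prodCongrLeft_apply, Equiv.coe_addRight]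
    rw [← hx, hf x, hEapp]
    refine Prod.ext ?_ ?_
    · simp [hxi, hFx, Pi.single_eq_same]
    · funext j
      simp only
      rw [Pi.add_apply, Pi.single_eq_of_ne j.2, add_zero]
      exact congrFun hxr j
  rw [key, Equiv.Perm.sign_prodCongrLeft]
  set F' : ({j // j ≠ i} → ZMod 2) → ZMod 2 := fun r => F (E.symm (0, r)) with hF'
  have hτ : ∀ r : {j // j ≠ i} → ZMod 2,
      E.symm (0, r + Pi.single (⟨l, hl⟩ : {j // j ≠ i}) 1)
        = E.symm (0, r) + Pi.single l 1 := by
    intro r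
    apply E.injective
    rw [Equiv.apply_symm_apply, hEapp]
    refine Prod.ext ?_ ?_
    · simp only
      rw [Pi.add_apply, Pi.single_eq_of_ne (Ne.symm hl), add_zero]
      have := congrArg Prod.fst (Equiv.apply_symm_apply E (0, r))
      rw [hEapp] at this
      exact this.symm
    · funext j
      simp only [Pi.add_apply]
      have hsnd := congrArg Prod.snd (Equiv.apply_symm_apply E (0, r))
      rw [hEapp] at hsnd
      have hv : (E.symm (0, r)) j.1 = r j := congrFun hsnd j
      rw [hv]
      congr 1
      rw [Pi.single_apply, Pi.single_apply]
      simp [Subtype.ext_iff]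
  refine Finset.prod_ninvolution
    (fun r => r + Pi.single (⟨l, hl⟩ : {j // j ≠ i}) 1) ?_ ?_ (fun _ => Finset.mem_univ _) ?_
  · intro r
    rcases zmod2_cases (F (E.symm (0, r))) with h | h <;>
      simp [sign_addRight_zmod2, hτ r, hinv, h]
  · intro r _ hcontra
    have hc := congrFun hcontra ⟨l, hl⟩
    simp only [Pi.add_apply, Pi.single_eq_same] at hc
    exact one_ne_zero (add_eq_left.mp hc)
  · intro r
    funext j
    simp only [Pi.add_apply]
    rw [add_assoc, ← Pi.add_apply (Pi.single _ _), ← Pi.single_add, zmod2_add_self,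
      Pi.single_zero, Pi.zero_apply, add_zero]


lemma addRight_add (a b : Fin g → ZMod 2) :
    (Equiv.addRight (a + b) : Equiv.Perm (Fin g → ZMod 2))
      = Equiv.addRight b * Equiv.addRight a := by
  ext x
  simp [Equiv.Perm.mul_apply, add_assoc]

lemma sign_addRight_pi (hg : 3 ≤ g) (c : Fin g → ZMod 2) :
    Equiv.Perm.sign (Equiv.addRight c : Equiv.Perm (Fin g → ZMod 2)) = 1 := by
  classical
  have hone : (Equiv.addRight (0 : Fin g → ZMod 2) : Equiv.Perm (Fin g → ZMod 2)) = 1 := by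
    ext x; simp
  have hsingle : ∀ (k : Fin g) (v : ZMod 2),
      Equiv.Perm.sign (Equiv.addRight (Pi.single k v) : Equiv.Perm (Fin g → ZMod 2)) = 1 := by
    intro k v
    rcases zmod2_cases v with rfl | rfl
    · rw [Pi.single_zero, hone, map_one]
    · obtain ⟨l, hlk, -⟩ := exists_third hg k k
      refine sign_single_modify k (fun _ => 1) _ (fun x => rfl) (fun _ _ => rfl) l hlk
        (fun _ => rfl)
  have main : ∀ s : Finset (Fin g),
      Equiv.Perm.sign (Equiv.addRight (∑ k ∈ s, Pi.single k (c k)) :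
        Equiv.Perm (Fin g → ZMod 2)) = 1 := by
    intro s
    induction s using Finset.induction with
    | empty => rw [Finset.sum_empty, hone, map_one]
    | insert _ _ hk ih =>
        rw [Finset.sum_insert hk, addRight_add, map_mul, ih, hsingle, mul_one]
  have := main Finset.univ
  rwa [Finset.univ_sum_single] at this

lemma sign_linear (hg : 3 ≤ g) (f : Equiv.Perm (Fin g → ZMod 2))
    (hadd : ∀ x y, f (x + y) = f x + f y) : Equiv.Perm.sign f = 1 := by
  classical
  have h0 : f 0 = 0 := by
    have := hadd 0 0
    simp only [add_zero] at this
    exact (add_eq_left.mp this.symm)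
  have hsmul : ∀ (c : ZMod 2) (x : Fin g → ZMod 2), f (c • x) = c • f x := by
    intro c x
    rcases zmod2_cases c with rfl | rfl
    · simp [h0]
    · simp
  set L : (Fin g → ZMod 2) →ₗ[ZMod 2] (Fin g → ZMod 2) :=
    { toFun := f, map_add' := hadd, map_smul' := hsmul } with hL
  set A := LinearMap.toMatrix' L with hA
  have hact : ∀ x, f x = A.mulVec x := by
    intro x
    have h1 : Matrix.toLin' A x = L x := by rw [hA, Matrix.toLin'_toMatrix']
    rw [Matrix.toLin'_apply] at h1
    exact h1.symm
  have hdet : A.det ≠ 0 := by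
    intro h
    obtain ⟨v, hv, hv0⟩ := Matrix.exists_mulVec_eq_zero_iff.2 h
    apply hv
    have : f v = f 0 := by rw [h0, hact v, hv0]
    exact f.injective this
  have main : ∀ (M : Matrix (Fin g) (Fin g) (ZMod 2)), M.det ≠ 0 →
      ∀ (f : Equiv.Perm (Fin g → ZMod 2)), (∀ x, f x = M.mulVec x) →
        Equiv.Perm.sign f = 1 := by
    intro M hM
    refine Matrix.diagonal_transvection_induction_of_det_ne_zero
      (P := fun M => ∀ (f : Equiv.Perm (Fin g → ZMod 2)),
        (∀ x, f x = M.mulVec x) → Equiv.Perm.sign f = 1) M hM ?_ ?_ ?_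
    · intro D hD f hf
      have hD1 : ∀ i, D i = 1 := by
        intro i
        rw [Matrix.det_diagonal] at hD
        have := Finset.prod_ne_zero_iff.1 hD i (Finset.mem_univ i)
        rcases zmod2_cases (D i) with h | h
        · exact absurd h this
        · exact h
      have hDD : Matrix.diagonal D = 1 := by
        have : D = fun _ => 1 := funext hD1
        rw [this, Matrix.diagonal_one]
      have : f = 1 := by
        apply Equiv.ext
        intro x
        rw [hf x, hDD, Matrix.one_mulVec]
        rfl
      rw [this, map_one]
    · intro t f hf
      have hft : ∀ x, f x = x + Pi.single t.i (t.c * x t.j) := by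
        intro x
        rw [hf x]
        rw [Matrix.TransvectionStruct.toMatrix, Matrix.transvection, Matrix.add_mulVec,
          Matrix.one_mulVec, Matrix.single_mulVec]
        rfl
      obtain ⟨l, hli, hlj⟩ := exists_third hg t.i t.j
      refine sign_single_modify t.i (fun x => t.c * x t.j) f hft ?_ l hli ?_
      · intro x v
        simp [Function.update_of_ne (Ne.symm t.hij)]
      · intro x
        simp [Pi.single_eq_of_ne (Ne.symm hlj)]
    · intro P Q hP hQ ihP ihQ f hf
      have hPu : IsUnit P.det := isUnit_iff_ne_zero.2 hP
      have hQu : IsUnit Q.det := isUnit_iff_ne_zero.2 hQ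
      set eP : Equiv.Perm (Fin g → ZMod 2) :=
        { toFun := P.mulVec, invFun := P⁻¹.mulVec,
          left_inv := fun x => by
            rw [Matrix.mulVec_mulVec, Matrix.nonsing_inv_mul P hPu, Matrix.one_mulVec],
          right_inv := fun x => by
            rw [Matrix.mulVec_mulVec, Matrix.mul_nonsing_inv P hPu, Matrix.one_mulVec] }
        with heP
      set eQ : Equiv.Perm (Fin g → ZMod 2) :=
        { toFun := Q.mulVec, invFun := Q⁻¹.mulVec,
          left_inv := fun x => by
            rw [Matrix.mulVec_mulVec, Matrix.nonsing_inv_mul Q hQu, Matrix.one_mulVec],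
          right_inv := fun x => by
            rw [Matrix.mulVec_mulVec, Matrix.mul_nonsing_inv Q hQu, Matrix.one_mulVec] }
        with heQ
      have hfPQ : f = eP * eQ := by
        apply Equiv.ext
        intro x
        rw [hf x, Equiv.Perm.mul_apply]
        show (P * Q).mulVec x = P.mulVec (Q.mulVec x)
        rw [Matrix.mulVec_mulVec]
      rw [hfPQ, map_mul, ihP eP (fun _ => rfl), ihQ eQ (fun _ => rfl), mul_one]
  exact main A hdet f hact

section Split

variable (D n : ℕ)

/-- The 2-torsion element of `ZMod D` (where `D = 2*n`) attached to `ε : ZMod 2`. -/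
def tor (ε : ZMod 2) : ZMod D := ((n * ε.val : ℕ) : ZMod D)

variable {D n}

lemma tor_zero : tor D n 0 = 0 := by simp [tor]

lemma val_tor (hD : D = 2 * n) (_hn : 0 < n) (ε : ZMod 2) :
    (tor D n ε).val = n * ε.val := by
  haveI : NeZero D := ⟨by omega⟩
  have hε : ε.val < 2 := ZMod.val_lt ε
  have h1 : n * ε.val ≤ n * 1 := Nat.mul_le_mul_left n (by omega)
  rw [tor, ZMod.val_natCast, Nat.mod_eq_of_lt (by omega)]

lemma tor_add (hD : D = 2 * n) (hn : 0 < n) (ε ε' : ZMod 2) :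
    tor D n (ε + ε') = tor D n ε + tor D n ε' := by
  have hval1 : (1 : ZMod 2).val = 1 := rfl
  rcases SignZD.zmod2_cases ε with rfl | rfl <;>
    rcases SignZD.zmod2_cases ε' with rfl | rfl
  · simp [tor_zero]
  · simp [tor_zero]
  · simp [tor_zero]
  · rw [(by decide : (1 : ZMod 2) + 1 = 0), tor_zero, tor, ← Nat.cast_add, hval1]
    have h1 : n * 1 + n * 1 = D := by omega
    rw [h1, ZMod.natCast_self]

lemma tor_fib (hD : D = 2 * n) (hn : 0 < n) (ε : ZMod 2) :
    (((tor D n ε).val / n : ℕ) : ZMod 2) = ε := by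
  rw [val_tor hD hn, Nat.mul_div_cancel_left _ hn]
  exact ZMod.natCast_rightInverse ε

lemma split_add_tor (hD : D = 2 * n) (hn : 0 < n) (u : ZMod D) (ε : ZMod 2) :
    (u + tor D n ε).val % n = u.val % n ∧
      (((u + tor D n ε).val / n : ℕ) : ZMod 2) = ((u.val / n : ℕ) : ZMod 2) + ε := by
  haveI : NeZero D := ⟨by omega⟩
  rcases SignZD.zmod2_cases ε with rfl | rfl
  · rw [tor_zero, add_zero, add_zero]
    exact ⟨rfl, rfl⟩
  · have hval : (tor D n 1).val = n := by
      rw [val_tor hD hn]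
      have : (1 : ZMod 2).val = 1 := rfl
      rw [this, mul_one]
    have hu : u.val < D := ZMod.val_lt u
    have hadd : (u + tor D n 1).val = (u.val + n) % D := by
      rw [ZMod.val_add, hval]
    rcases Nat.lt_or_ge u.val n with hlt | hge
    · have hV : (u + tor D n 1).val = u.val + n := by
        rw [hadd, Nat.mod_eq_of_lt (by omega)]
      constructor
      · rw [hV, Nat.add_mod_right]
      · rw [hV, Nat.add_div_right _ hn]
        push_cast
        ring
    · have hV : (u + tor D n 1).val = u.val - n := by
        rw [hadd, Nat.mod_eq_sub_mod (by omega), Nat.mod_eq_of_lt (by omega)]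
        omega
      constructor
      · rw [hV]
        conv_rhs => rw [(by omega : u.val = (u.val - n) + n)]
        rw [Nat.add_mod_right]
      · rw [hV]
        have h1 : u.val - n < n := by omega
        have h2 : (u.val - n) / n = 0 := Nat.div_eq_of_lt h1
        have h3 : u.val / n = 1 := by
          rw [Nat.div_eq_sub_div hn hge, Nat.div_eq_of_lt h1]
        rw [h2, h3]
        decide

lemma tor_of_two_torsion (hD : D = 2 * n) (hn : 0 < n) (u : ZMod D) (h : u + u = 0) :
    tor D n ((u.val / n : ℕ) : ZMod 2) = u := by
  haveI : NeZero D := ⟨by omega⟩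
  have hu : u.val < D := ZMod.val_lt u
  have hcast : ((u.val + u.val : ℕ) : ZMod D) = 0 := by
    push_cast
    rw [ZMod.natCast_rightInverse u]
    exact h
  have hdvd : D ∣ u.val + u.val := (ZMod.natCast_eq_zero_iff _ _).1 hcast
  obtain ⟨k, hk⟩ := hdvd
  have hcases : u.val = 0 ∨ u.val = n := by
    rcases Nat.lt_or_ge k 2 with hk2 | hk2
    · interval_cases k
      · left; omega
      · right; omega
    · exfalso
      have h2 : D * 2 ≤ D * k := Nat.mul_le_mul_left D hk2
      have hlt : u.val + u.val < D * 2 := by omega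
      exact (Nat.lt_of_lt_of_le hlt h2).ne hk
  rcases hcases with h0 | hn'
  · have hu0 : u = 0 := (ZMod.val_eq_zero u).1 h0
    rw [h0, Nat.zero_div, hu0]
    exact tor_zero
  · rw [hn', Nat.div_self hn]
    have h1 : ((1 : ℕ) : ZMod 2) = 1 := by decide
    rw [h1, tor]
    have h2 : (1 : ZMod 2).val = 1 := rfl
    rw [h2, mul_one, ← hn']
    exact ZMod.natCast_rightInverse u


lemma split_left_inv (hD : D = 2 * n) (hn : 0 < n) (u : ZMod D) :
    ((u.val % n + n * (((u.val / n : ℕ) : ZMod 2)).val : ℕ) : ZMod D) = u := by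
  haveI : NeZero D := ⟨by omega⟩
  have h1 : u.val < D := ZMod.val_lt u
  have h2 : u.val / n < 2 := by
    rw [Nat.div_lt_iff_lt_mul hn]; omega
  rw [ZMod.val_natCast, Nat.mod_eq_of_lt h2, Nat.mod_add_div]
  exact ZMod.natCast_rightInverse u

lemma split_right_inv (hD : D = 2 * n) (hn : 0 < n) (q : ℕ) (hq : q < n) (b : ZMod 2) :
    (((q + n * b.val : ℕ) : ZMod D).val % n = q ∧
      ((((q + n * b.val : ℕ) : ZMod D).val / n : ℕ) : ZMod 2) = b) := by
  haveI : NeZero D := ⟨by omega⟩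
  have hb : b.val < 2 := ZMod.val_lt b
  have hlt : q + n * b.val < D := by
    have : n * b.val ≤ n * 1 := Nat.mul_le_mul_left n (by omega)
    omega
  have hval : ((q + n * b.val : ℕ) : ZMod D).val = q + n * b.val := by
    rw [ZMod.val_natCast, Nat.mod_eq_of_lt hlt]
  constructor
  · rw [hval, Nat.add_mul_mod_self_left, Nat.mod_eq_of_lt hq]
  · rw [hval, Nat.add_mul_div_left _ _ hn, Nat.div_eq_of_lt hq, zero_add]
    exact ZMod.natCast_rightInverse b

end Split

section Assembly

variable {g : ℕ} (d n : Fin g → ℕ)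

/-- Base (quotient) coordinates of an element. -/
def baseMap (hnpos : ∀ i, 0 < n i) (x : (i : Fin g) → ZMod (d i)) : (i : Fin g) → Fin (n i) :=
  fun i => ⟨(x i).val % n i, Nat.mod_lt _ (hnpos i)⟩

/-- Fiber (2-torsion) coordinates of an element. -/
def fibMap (x : (i : Fin g) → ZMod (d i)) : Fin g → ZMod 2 :=
  fun i => (((x i).val / n i : ℕ) : ZMod 2)

/-- Reconstruction from base and fiber coordinates. -/
def unsplitMap (q : (i : Fin g) → Fin (n i)) (b : Fin g → ZMod 2) :
    (i : Fin g) → ZMod (d i) :=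
  fun i => (((q i : ℕ) + n i * (b i).val : ℕ) : ZMod (d i))

/-- The pi-type 2-torsion element attached to `ε`. -/
def torPi (ε : Fin g → ZMod 2) : (i : Fin g) → ZMod (d i) :=
  fun i => tor (d i) (n i) (ε i)

set_option linter.unusedVariables false in
/-- The coordinate splitting equivalence. -/
def splitEquiv (hDn : ∀ i, d i = 2 * n i) (hnpos : ∀ i, 0 < n i) : ((i : Fin g) → ZMod (d i)) ≃ (((i : Fin g) → Fin (n i)) × (Fin g → ZMod 2)) where
  toFun x := (baseMap d n hnpos x, fibMap d n x)
  invFun p := unsplitMap d n p.1 p.2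
  left_inv x := by
    funext i
    exact split_left_inv (hDn i) (hnpos i) (x i)
  right_inv p := by
    obtain ⟨q, b⟩ := p
    refine Prod.ext ?_ ?_
    · funext i
      exact Fin.ext ((split_right_inv (hDn i) (hnpos i) (q i) (q i).isLt (b i)).1)
    · funext i
      exact (split_right_inv (hDn i) (hnpos i) (q i) (q i).isLt (b i)).2

lemma splitEquiv_apply (hDn : ∀ i, d i = 2 * n i) (hnpos : ∀ i, 0 < n i) (x : (i : Fin g) → ZMod (d i)) :
    splitEquiv d n hDn hnpos x = (baseMap d n hnpos x, fibMap d n x) := rfl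

lemma splitEquiv_symm_apply (hDn : ∀ i, d i = 2 * n i) (hnpos : ∀ i, 0 < n i) (p : ((i : Fin g) → Fin (n i)) × (Fin g → ZMod 2)) :
    (splitEquiv d n hDn hnpos).symm p = unsplitMap d n p.1 p.2 := rfl

lemma torPi_zero : torPi d n (0 : Fin g → ZMod 2) = 0 :=
  funext fun _ => tor_zero

lemma torPi_add (hDn : ∀ i, d i = 2 * n i) (hnpos : ∀ i, 0 < n i) (a b : Fin g → ZMod 2) :
    torPi d n (a + b) = torPi d n a + torPi d n b :=
  funext fun i => tor_add (hDn i) (hnpos i) (a i) (b i)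

lemma fib_torPi (hDn : ∀ i, d i = 2 * n i) (hnpos : ∀ i, 0 < n i) (ε : Fin g → ZMod 2) : fibMap d n (torPi d n ε) = ε :=
  funext fun i => tor_fib (hDn i) (hnpos i) (ε i)

lemma torPi_fib_of (hDn : ∀ i, d i = 2 * n i) (hnpos : ∀ i, 0 < n i) (x : (i : Fin g) → ZMod (d i)) (h : x + x = 0) :
    torPi d n (fibMap d n x) = x :=
  funext fun i => tor_of_two_torsion (hDn i) (hnpos i) (x i) (congrFun h i)

lemma splitEquiv_add_tor (hDn : ∀ i, d i = 2 * n i) (hnpos : ∀ i, 0 < n i) (x : (i : Fin g) → ZMod (d i)) (ε : Fin g → ZMod 2) :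
    splitEquiv d n hDn hnpos (x + torPi d n ε)
      = ((splitEquiv d n hDn hnpos x).1, (splitEquiv d n hDn hnpos x).2 + ε) := by
  rw [splitEquiv_apply, splitEquiv_apply]
  refine Prod.ext ?_ ?_
  · funext i
    apply Fin.ext
    exact (split_add_tor (hDn i) (hnpos i) (x i) (ε i)).1
  · funext i
    exact (split_add_tor (hDn i) (hnpos i) (x i) (ε i)).2

end Assembly

section Main

lemma aux_main {g : ℕ} (d n : Fin g → ℕ)
    (hDn : ∀ i, d i = 2 * n i) (hnpos : ∀ i, 0 < n i) (hg : 3 ≤ g)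
    [Fintype ((i : Fin g) → ZMod (d i))] [DecidableEq ((i : Fin g) → ZMod (d i))]
    (φ : ((i : Fin g) → ZMod (d i)) ≃+ ((i : Fin g) → ZMod (d i))) :
    Equiv.Perm.sign (φ.toEquiv) = 1 := by
  set e := splitEquiv d n hDn hnpos with he
  set Mfun : (Fin g → ZMod 2) → (Fin g → ZMod 2) :=
    fun ε => fibMap d n (φ (torPi d n ε)) with hMdef
  have hφtor : ∀ ε, φ (torPi d n ε) = torPi d n (Mfun ε) := by
    intro ε
    have h2 : φ (torPi d n ε) + φ (torPi d n ε) = 0 := by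
      rw [← map_add]
      have : torPi d n ε + torPi d n ε = 0 := by
        rw [← torPi_add d n hDn hnpos]
        have hε : ε + ε = 0 := funext fun i => zmod2_add_self (ε i)
        rw [hε, torPi_zero]
      rw [this, map_zero]
    exact (torPi_fib_of d n hDn hnpos _ h2).symm
  have hMadd : ∀ a b, Mfun (a + b) = Mfun a + Mfun b := by
    intro a b
    have h1 : φ (torPi d n (a + b)) = torPi d n (Mfun a + Mfun b) := by
      rw [torPi_add d n hDn hnpos, map_add, hφtor, hφtor, ← torPi_add d n hDn hnpos]
    show fibMap d n (φ (torPi d n (a + b))) = Mfun a + Mfun b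
    rw [h1, fib_torPi d n hDn hnpos]
  have hM0 : Mfun 0 = 0 := by
    have := hMadd 0 0
    rw [add_zero] at this
    exact (add_eq_left.mp this.symm)
  have hMinj : Function.Injective Mfun := by
    intro a b hab
    have h1 : φ (torPi d n a) = φ (torPi d n b) := by
      rw [hφtor, hφtor, hab]
    have h2 := φ.injective h1
    have h3 := congrArg (fibMap d n) h2
    rwa [fib_torPi d n hDn hnpos, fib_torPi d n hDn hnpos] at h3
  have hMbij : Function.Bijective Mfun := Finite.injective_iff_bijective.mp hMinj
  set Mperm : Equiv.Perm (Fin g → ZMod 2) := Equiv.ofBijective _ hMbij with hMperm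
  set σfun : ((i : Fin g) → Fin (n i)) → ((i : Fin g) → Fin (n i)) :=
    fun q => (e (φ (e.symm (q, 0)))).1 with hσdef
  set cfun : ((i : Fin g) → Fin (n i)) → (Fin g → ZMod 2) :=
    fun q => (e (φ (e.symm (q, 0)))).2 with hcdef
  have hstruct : ∀ q b, e (φ (e.symm (q, b))) = (σfun q, Mfun b + cfun q) := by
    intro q b
    have hsp : e.symm (q, b) = e.symm (q, 0) + torPi d n b := by
      funext i
      show unsplitMap d n q b i = unsplitMap d n q 0 i + tor (d i) (n i) (b i)
      rw [unsplitMap, unsplitMap, tor]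
      have h0 : ((0 : Fin g → ZMod 2) i).val = 0 := rfl
      rw [h0, mul_zero, add_zero]
      push_cast
      ring
    calc e (φ (e.symm (q, b)))
        = e (φ (e.symm (q, 0)) + torPi d n (Mfun b)) := by
          rw [hsp, map_add, hφtor]
      _ = ((e (φ (e.symm (q, 0)))).1, (e (φ (e.symm (q, 0)))).2 + Mfun b) :=
          splitEquiv_add_tor d n hDn hnpos _ _
      _ = (σfun q, Mfun b + cfun q) := by rw [add_comm]
  have hσinj : Function.Injective σfun := by
    intro q q' hqq
    set b := Mperm.symm (cfun q' - cfun q) with hb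
    have hMb : Mfun b = cfun q' - cfun q := Mperm.apply_symm_apply _
    have h1 : e (φ (e.symm (q, b))) = e (φ (e.symm (q', 0))) := by
      rw [hstruct, hstruct, hqq, hMb, hM0, zero_add, sub_add_cancel]
    have h2 := e.symm.injective (φ.injective (e.injective h1))
    have h3 : q = q' := congrArg Prod.fst h2
    exact h3
  have hσbij : Function.Bijective σfun := Finite.injective_iff_bijective.mp hσinj
  set σperm : Equiv.Perm ((i : Fin g) → Fin (n i)) := Equiv.ofBijective _ hσbij with hσperm
  set Ψ : Equiv.Perm (((i : Fin g) → Fin (n i)) × (Fin g → ZMod 2)) :=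
    (e.symm.trans φ.toEquiv).trans e with hΨdef
  have hsignΨ : Equiv.Perm.sign Ψ = Equiv.Perm.sign φ.toEquiv :=
    Equiv.Perm.sign_symm_trans_trans φ.toEquiv e
  set Φ1 : Equiv.Perm (((i : Fin g) → Fin (n i)) × (Fin g → ZMod 2)) :=
    Equiv.prodCongrLeft (fun _ : (Fin g → ZMod 2) => σperm) with hΦ1
  set Φ2 : Equiv.Perm (((i : Fin g) → Fin (n i)) × (Fin g → ZMod 2)) :=
    Equiv.prodCongrRight (fun q : ((i : Fin g) → Fin (n i)) =>
      Mperm.trans (Equiv.addRight (cfun (σperm.symm q)))) with hΦ2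
  have hcomp : Ψ = Φ2 * Φ1 := by
    apply Equiv.ext
    rintro ⟨q, b⟩
    have hL : Ψ (q, b) = (σfun q, Mfun b + cfun q) := hstruct q b
    have hR : (Φ2 * Φ1) (q, b) = (σfun q, Mfun b + cfun (σperm.symm (σperm q))) := rfl
    rw [hL, hR, Equiv.symm_apply_apply]
  have hsΦ1 : Equiv.Perm.sign Φ1 = 1 := by
    rw [hΦ1, Equiv.Perm.sign_prodCongrLeft]
    refine Finset.prod_ninvolution
      (fun b => b + Pi.single (⟨0, by omega⟩ : Fin g) 1) ?_ ?_
      (fun _ => Finset.mem_univ _) ?_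
    · intro b
      exact Int.units_mul_self _
    · intro b _ hc
      have hcc := congrFun hc ⟨0, by omega⟩
      simp only [Pi.add_apply, Pi.single_eq_same] at hcc
      exact absurd (add_eq_left.mp hcc) one_ne_zero
    · intro b
      funext j
      simp only [Pi.add_apply]
      rw [add_assoc, ← Pi.add_apply (Pi.single _ _), ← Pi.single_add, zmod2_add_self,
        Pi.single_zero, Pi.zero_apply, add_zero]
  have hsΦ2 : Equiv.Perm.sign Φ2 = 1 := by
    rw [hΦ2, Equiv.Perm.sign_prodCongrRight]
    refine Finset.prod_eq_one ?_
    intro q _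
    have hmul : Mperm.trans (Equiv.addRight (cfun (σperm.symm q)))
        = (Equiv.addRight (cfun (σperm.symm q))) * Mperm := rfl
    rw [hmul, map_mul, sign_addRight_pi hg, sign_linear hg Mperm hMadd, one_mul]
  rw [← hsignΨ, hcomp, map_mul, hsΦ1, hsΦ2, mul_one]

end Main

end SignZD



/-- If `d₁ | ⋯ | d_g` are even positive integers with `g ≥ 3`, then every group
automorphism of `ℤ_D = ⊕ᵢ ℤ/dᵢℤ` induces an even permutation of the underlying set. -/
theorem sign_automorphism_ZD (g : ℕ) (hg : 3 ≤ g)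
    (d : Fin g → ℕ) (hpos : ∀ i, 0 < d i) (heven : ∀ i, 2 ∣ d i)
    (hdvd : ∀ i j : Fin g, i ≤ j → d i ∣ d j)
    [Fintype ((i : Fin g) → ZMod (d i))] [DecidableEq ((i : Fin g) → ZMod (d i))]
    (φ : ((i : Fin g) → ZMod (d i)) ≃+ ((i : Fin g) → ZMod (d i))) :
    Equiv.Perm.sign (φ.toEquiv) = 1 := by
  obtain ⟨n, hDn, hnpos⟩ : ∃ n : Fin g → ℕ, (∀ i, d i = 2 * n i) ∧ (∀ i, 0 < n i) := by
    refine ⟨fun i => d i / 2, fun i => ?_, fun i => ?_⟩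
    · show d i = 2 * (d i / 2)
      have := heven i; omega
    · show 0 < d i / 2
      have h1 := hpos i; have h2 := heven i; omega
  exact SignZD.aux_main d n hDn hnpos hg φ
end

section
/- Let D = diag(d₁,...,d_g) with d₁ | ... | d_g positive integers, and let R = [[A,B],[Γ,Δ]] (in g×g blocks) be an integer matrix satisfying R·J_D·Rᵀ = J_D where J_D = [[0,D],[-D,0]], and suppose Γ = D·Γ₁ for an integer matrix Γ₁. Then the matrix Δ induces an automorphism of the group ℤ_D = ℤ/d₁ℤ ⊕ ... ⊕ ℤ/d_gℤ by multiplication. -/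
open Matrix

/-- If `R = [[A,B],[Γ,Δ]]` is an integral matrix with `R·J_D·Rᵀ = J_D`, where
`J_D = [[0,D],[-D,0]]` and `D = diag(d₁,…,d_g)` with `d₁ | ⋯ | d_g`, and `Γ = D·Γ₁`
for an integral matrix `Γ₁`, then `Δ` induces an automorphism of
`ℤ_D = ⊕ᵢ ℤ/dᵢℤ` by matrix multiplication. -/
theorem delta_induces_automorphism (g : ℕ)
    (d : Fin g → ℕ) (hpos : ∀ i, 0 < d i)
    (hdvd : ∀ i j : Fin g, i ≤ j → d i ∣ d j)
    (A B Γ Δ Γ₁ : Matrix (Fin g) (Fin g) ℤ)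
    (D : Matrix (Fin g) (Fin g) ℤ) (hD : D = Matrix.diagonal (fun i => (d i : ℤ)))
    (hΓ : Γ = D * Γ₁)
    (hsymp : (Matrix.fromBlocks A B Γ Δ) * (Matrix.fromBlocks 0 D (-D) 0) *
        (Matrix.fromBlocks A B Γ Δ)ᵀ = Matrix.fromBlocks 0 D (-D) 0) :
    ∃ φ : ((i : Fin g) → ZMod (d i)) ≃+ ((i : Fin g) → ZMod (d i)),
      ∀ x : Fin g → ℤ,
        φ (fun i => ((x i : ℤ) : ZMod (d i))) =
          fun i => ((Δ.mulVec x i : ℤ) : ZMod (d i)) := by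
  haveI : ∀ i, NeZero (d i) := fun i => ⟨(hpos i).ne'⟩
  have hdne : ∀ i, (d i : ℤ) ≠ 0 := fun i => Int.natCast_ne_zero.mpr (hpos i).ne'
  set R : Matrix (Fin g ⊕ Fin g) (Fin g ⊕ Fin g) ℤ := Matrix.fromBlocks A B Γ Δ with hRdef
  set J : Matrix (Fin g ⊕ Fin g) (Fin g ⊕ Fin g) ℤ := Matrix.fromBlocks 0 D (-D) 0 with hJdef
  -- R is a unit: det R squared times det J = det J, and det J ≠ 0 (check over ℚ)
  have hRunit : IsUnit R := by
    rw [Matrix.isUnit_iff_isUnit_det]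
    have hdet : R.det * R.det * J.det = J.det := by
      have := congrArg Matrix.det hsymp
      rw [Matrix.det_mul, Matrix.det_mul, Matrix.det_transpose] at this
      linear_combination this
    have hDdet : D.det ≠ 0 := by
      rw [hD, Matrix.det_diagonal]
      exact Finset.prod_ne_zero_iff.mpr fun i _ => hdne i
    have hJdet : J.det ≠ 0 := by
      have hprod : J * (Matrix.fromBlocks 0 (-1) 1 0 : Matrix (Fin g ⊕ Fin g) (Fin g ⊕ Fin g) ℤ)
          = Matrix.fromBlocks D 0 0 D := by
        rw [hJdef, Matrix.fromBlocks_multiply]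
        simp
      have h5 : J.det * (Matrix.fromBlocks (0 : Matrix (Fin g) (Fin g) ℤ) (-1 : Matrix (Fin g) (Fin g) ℤ) (1 : Matrix (Fin g) (Fin g) ℤ) (0 : Matrix (Fin g) (Fin g) ℤ)).det
          = D.det * D.det := by
        rw [← Matrix.det_mul, hprod, Matrix.det_fromBlocks_zero₂₁]
      intro h0
      rw [h0, zero_mul] at h5
      exact mul_ne_zero hDdet hDdet h5.symm
    have h1 : R.det * R.det = 1 :=
      mul_right_cancel₀ hJdet (by linear_combination hdet)
    exact IsUnit.of_mul_eq_one _ h1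
  obtain ⟨u, hu⟩ := hRunit
  set R' : Matrix (Fin g ⊕ Fin g) (Fin g ⊕ Fin g) ℤ := ↑u⁻¹ with hR'def
  have hR'R : R' * R = 1 := by rw [hR'def, ← hu]; exact u.inv_mul
  have hRR' : R * R' = 1 := by rw [hR'def, ← hu]; exact u.mul_inv
  -- key identity: J * Rᵀ = R' * J
  have hkey : J * Rᵀ = R' * J := by
    calc J * Rᵀ = (R' * R) * (J * Rᵀ) := by rw [hR'R, one_mul]
    _ = R' * (R * J * Rᵀ) := by noncomm_ring
    _ = R' * J := by rw [hsymp]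
  -- blocks of R'
  set P := R'.toBlocks₁₁ with hP
  set Q := R'.toBlocks₁₂ with hQ
  set S := R'.toBlocks₂₁ with hS
  set T := R'.toBlocks₂₂ with hT
  have hR'blocks : R' = Matrix.fromBlocks P Q S T := (Matrix.fromBlocks_toBlocks R').symm
  have hkey' : Matrix.fromBlocks (D * Bᵀ) (D * Δᵀ) (-(D * Aᵀ)) (-(D * Γᵀ)) =
      Matrix.fromBlocks (-(Q * D)) (P * D) (-(T * D)) (S * D) := by
    calc Matrix.fromBlocks (D * Bᵀ) (D * Δᵀ) (-(D * Aᵀ)) (-(D * Γᵀ)) = J * Rᵀ := by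
          rw [hJdef, hRdef, Matrix.fromBlocks_transpose, Matrix.fromBlocks_multiply]
          simp [Matrix.neg_mul]
    _ = R' * J := hkey
    _ = Matrix.fromBlocks (-(Q * D)) (P * D) (-(T * D)) (S * D) := by
          rw [hR'blocks, hJdef, Matrix.fromBlocks_multiply]
          simp [Matrix.mul_neg]
  have e1 : P * D = D * Δᵀ := by
    have := congrArg Matrix.toBlocks₁₂ hkey'
    simpa [Matrix.toBlocks_fromBlocks₁₂] using this.symm
  have e3 : T * D = D * Aᵀ := by
    have := congrArg Matrix.toBlocks₂₁ hkey'
    simp only [Matrix.toBlocks_fromBlocks₂₁] at this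
    exact neg_injective this.symm
  have e2 : S * D = -(D * Γᵀ) := by
    have := congrArg Matrix.toBlocks₂₂ hkey'
    simpa [Matrix.toBlocks_fromBlocks₂₂] using this.symm
  -- S = -(D * Γ₁ᵀ)
  have hSeq : S = -(D * Γ₁ᵀ) := by
    have h2 : S * D = (-(D * Γ₁ᵀ)) * D := by
      rw [e2, hΓ, Matrix.transpose_mul, hD, Matrix.diagonal_transpose]
      noncomm_ring
    ext i j
    have h3 := congrFun (congrFun h2 i) j
    rw [hD] at h3 ⊢
    rw [Matrix.mul_diagonal, Matrix.mul_diagonal] at h3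
    exact mul_right_cancel₀ (hdne j) h3
  -- T * Δ = 1 + D * (Γ₁ᵀ * B)
  have hTΔ : T * Δ = 1 + D * (Γ₁ᵀ * B) := by
    have hbr : S * B + T * Δ = 1 := by
      have := hR'R
      rw [hR'blocks, hRdef, Matrix.fromBlocks_multiply] at this
      have hone : (1 : Matrix (Fin g ⊕ Fin g) (Fin g ⊕ Fin g) ℤ).toBlocks₂₂ = 1 := by
        rw [← Matrix.fromBlocks_one, Matrix.toBlocks_fromBlocks₂₂]
      have := congrArg Matrix.toBlocks₂₂ this
      rw [Matrix.toBlocks_fromBlocks₂₂, hone] at this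
      exact this
    have h7 : T * Δ = 1 - S * B := eq_sub_of_add_eq' hbr
    rw [h7, hSeq]
    noncomm_ring
  -- divisibility facts
  have hΔd : ∀ i j, (d i : ℤ) ∣ Δ i j * d j := by
    intro i j
    have := congrFun (congrFun e1 j) i
    rw [hD, Matrix.mul_diagonal, Matrix.diagonal_mul] at this
    rw [Matrix.transpose_apply] at this
    exact dvd_def.mpr ⟨P j i, by linarith⟩
  have hTd : ∀ i j, (d i : ℤ) ∣ T i j * d j := by
    intro i j
    have := congrFun (congrFun e3 i) j
    rw [hD, Matrix.mul_diagonal, Matrix.diagonal_mul] at this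
    rw [Matrix.transpose_apply] at this
    exact dvd_def.mpr ⟨A j i, by linarith⟩
  -- generic lemma: matrices with this divisibility property preserve congruences
  have hmul : ∀ (M : Matrix (Fin g) (Fin g) ℤ), (∀ i j, (d i : ℤ) ∣ M i j * d j) →
      ∀ w : Fin g → ℤ, (∀ j, (d j : ℤ) ∣ w j) → ∀ i, (d i : ℤ) ∣ M.mulVec w i := by
    intro M hM w hw i
    rw [Matrix.mulVec, dotProduct]
    apply Finset.dvd_sum
    intro j _
    obtain ⟨c, hc⟩ := hw j
    rw [hc]
    have : M i j * (↑(d j) * c) = M i j * ↑(d j) * c := by ring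
    rw [this]
    exact Dvd.dvd.mul_right (hM i j) c
  -- cast helpers
  have hcast_dvd : ∀ (j : Fin g) (a b : ℤ),
      ((a : ZMod (d j)) = (b : ZMod (d j))) → (d j : ℤ) ∣ b - a := by
    intro j a b h
    exact (Int.modEq_iff_dvd).mp ((ZMod.intCast_eq_intCast_iff a b (d j)).mp h)
  have hlift : ∀ (j : Fin g) (a : ZMod (d j)), ((((a.val : ℤ)) : ZMod (d j)) = a) := by
    intro j a
    rw [Int.cast_natCast, ZMod.natCast_val, ZMod.cast_id]
  -- congruence lemma for Δ
  have hcong : ∀ u v : Fin g → ℤ, (∀ j, (d j : ℤ) ∣ (u j - v j)) →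
      ∀ i, ((Δ.mulVec u i : ℤ) : ZMod (d i)) = ((Δ.mulVec v i : ℤ) : ZMod (d i)) := by
    intro u v h i
    rw [ZMod.intCast_eq_intCast_iff]
    apply Int.modEq_iff_dvd.mpr
    have heq : Δ.mulVec v i - Δ.mulVec u i = Δ.mulVec (v - u) i := by
      rw [Matrix.mulVec_sub]; simp
    rw [heq]
    refine hmul Δ hΔd (v - u) (fun j => ?_) i
    have := dvd_neg.mpr (h j)
    simpa [neg_sub] using this
  -- the map
  set f : ((i : Fin g) → ZMod (d i)) → ((i : Fin g) → ZMod (d i)) :=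
    fun x i => ((Δ.mulVec (fun j => ((x j).val : ℤ)) i : ℤ) : ZMod (d i)) with hf
  have hf_lift : ∀ (u : Fin g → ℤ),
      f (fun j => ((u j : ℤ) : ZMod (d j))) = fun i => ((Δ.mulVec u i : ℤ) : ZMod (d i)) := by
    intro u
    funext i
    apply hcong _ u _ i
    intro j
    apply hcast_dvd j (u j)
    simp [ZMod.natCast_val, ZMod.cast_id]
  have hfadd : ∀ x y, f (x + y) = f x + f y := by
    intro x y
    funext i
    have step1 : f (x + y) i =
        ((Δ.mulVec ((fun j => ((x j).val : ℤ)) + (fun j => ((y j).val : ℤ))) i : ℤ) : ZMod (d i)) := by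
      apply hcong
      intro j
      apply hcast_dvd j
      simp [ZMod.natCast_val, ZMod.cast_id]
    have step2 : ((Δ.mulVec ((fun j => ((x j).val : ℤ)) + (fun j => ((y j).val : ℤ))) i : ℤ) : ZMod (d i))
        = f x i + f y i := by
      rw [Matrix.mulVec_add, Pi.add_apply, Int.cast_add]
    rw [Pi.add_apply, step1, step2]
  have hfzero : f 0 = 0 := by
    funext i
    simp [hf, Matrix.mulVec]
  -- injectivity
  have hinj : Function.Injective f := by
    intro x y h
    have h1 : ∀ i, (d i : ℤ) ∣ Δ.mulVec ((fun j => ((x j).val : ℤ)) - (fun j => ((y j).val : ℤ))) i := by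
      intro i
      rw [Matrix.mulVec_sub]
      apply hcast_dvd i
      exact (congrFun h i).symm
    set w : Fin g → ℤ := (fun j => ((x j).val : ℤ)) - (fun j => ((y j).val : ℤ)) with hw
    have h2 : ∀ i, (d i : ℤ) ∣ (T * Δ).mulVec w i := by
      intro i
      rw [← Matrix.mulVec_mulVec]
      exact hmul T hTd _ h1 i
    have h3 : ∀ i, (d i : ℤ) ∣ w i := by
      intro i
      have := h2 i
      rw [hTΔ, Matrix.add_mulVec, Matrix.one_mulVec] at this
      have hdiag : (D * (Γ₁ᵀ * B)).mulVec w i = (d i : ℤ) * ((Γ₁ᵀ * B).mulVec w i) := by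
        rw [← Matrix.mulVec_mulVec, hD, Matrix.mulVec_diagonal]
      rw [Pi.add_apply, hdiag] at this
      have h6 := dvd_sub this (dvd_mul_right ((d i : ℤ)) ((Γ₁ᵀ * B).mulVec w i))
      simpa using h6
    funext i
    have h4 : (((x i).val : ℤ) : ZMod (d i)) = (((y i).val : ℤ) : ZMod (d i)) := by
      rw [ZMod.intCast_eq_intCast_iff]
      exact (Int.modEq_iff_dvd.mpr (h3 i)).symm
    rw [← hlift i (x i), ← hlift i (y i), h4]
  have hbij : Function.Bijective f := Finite.injective_iff_bijective.mp hinj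
  refine ⟨AddEquiv.ofBijective (AddMonoidHom.mk' f hfadd) hbij, ?_⟩
  intro x
  exact hf_lift x
end

section
/- Let Z be a complex symmetric g×g matrix with positive definite imaginary part, and let γ, δ be real g×g matrices such that M = [[α,β],[γ,δ]] is a real symplectic 2g×2g matrix (M·J·Mᵀ = J with J = [[0,I],[-I,0]]). Then γZ + δ is invertible. -/
open Matrix Complex

/-- If `Z` is a complex symmetric `g×g` matrix with positive definite imaginary part and
`M = [[α,β],[γ,δ]]` is a real symplectic `2g×2g` matrix, then `γZ + δ` is invertible. -/
theorem gammaZ_add_delta_invertible (g : ℕ)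
    (Z : Matrix (Fin g) (Fin g) ℂ) (hsymm : Zᵀ = Z)
    (hpos : (Z.map Complex.im).PosDef)
    (α β γ δ : Matrix (Fin g) (Fin g) ℝ)
    (hsymp : (Matrix.fromBlocks α β γ δ) * (Matrix.fromBlocks 0 1 (-1) 0) *
        (Matrix.fromBlocks α β γ δ)ᵀ = Matrix.fromBlocks 0 1 (-1) 0) :
    IsUnit (γ.map (Complex.ofReal) * Z + δ.map (Complex.ofReal)) := by
  set M := Matrix.fromBlocks α β γ δ with hM
  have hmem : M ∈ Matrix.symplecticGroup (Fin g) ℝ := by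
    rw [SymplecticGroup.mem_iff]
    have hJ : Matrix.J (Fin g) ℝ = -(Matrix.fromBlocks 0 1 (-1) 0) := by
      rw [Matrix.J]
      simp [Matrix.fromBlocks_neg]
    rw [hJ, Matrix.mul_neg, Matrix.neg_mul, hsymp]
  have hT : Mᵀ * Matrix.J (Fin g) ℝ * M = Matrix.J (Fin g) ℝ :=
    SymplecticGroup.mem_iff'.mp hmem
  rw [hM, Matrix.J, Matrix.fromBlocks_transpose, Matrix.fromBlocks_multiply,
    Matrix.fromBlocks_multiply] at hT
  simp only [Matrix.mul_zero, Matrix.mul_neg, Matrix.mul_one, Matrix.zero_mul,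
    Matrix.one_mul, zero_add, add_zero, neg_zero] at hT
  have hr1 : γᵀ * α + -αᵀ * γ = 0 := by simpa using congrArg Matrix.toBlocks₁₁ hT
  have hr2 : γᵀ * β + -αᵀ * δ = -1 := by simpa using congrArg Matrix.toBlocks₁₂ hT
  have hr3 : δᵀ * α + -βᵀ * γ = 1 := by simpa using congrArg Matrix.toBlocks₂₁ hT
  have hr4 : δᵀ * β + -βᵀ * δ = 0 := by simpa using congrArg Matrix.toBlocks₂₂ hT
  -- complex versions
  set A := α.map (Complex.ofReal) with hA
  set B := β.map (Complex.ofReal) with hB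
  set C := γ.map (Complex.ofReal) with hC
  set D := δ.map (Complex.ofReal) with hD
  have hmapT : ∀ X : Matrix (Fin g) (Fin g) ℝ, (Xᵀ).map (Complex.ofReal)
      = (X.map (Complex.ofReal))ᵀ := fun X => Matrix.transpose_map
  have hco : (⇑Complex.ofRealHom : ℝ → ℂ) = Complex.ofReal := rfl
  have hc1 : Cᵀ * A = Aᵀ * C := by
    have h := congrArg (Complex.ofRealHom.mapMatrix) hr1
    simp only [map_add, _root_.map_mul, map_neg, map_zero, RingHom.mapMatrix_apply, hco] at h
    rw [hmapT, hmapT] at h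
    rw [← hA, ← hC] at h
    linear_combination (norm := noncomm_ring) h
  have hc2 : Aᵀ * D - Cᵀ * B = 1 := by
    have h := congrArg (Complex.ofRealHom.mapMatrix) hr2
    simp only [map_add, _root_.map_mul, map_neg, map_zero, _root_.map_one,
      RingHom.mapMatrix_apply, hco] at h
    rw [hmapT, hmapT] at h
    rw [← hA, ← hB, ← hC, ← hD] at h
    linear_combination (norm := noncomm_ring) -h
  have hc3 : Bᵀ * C - Dᵀ * A = -1 := by
    have h := congrArg (Complex.ofRealHom.mapMatrix) hr3
    simp only [map_add, _root_.map_mul, map_neg, map_zero, _root_.map_one,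
      RingHom.mapMatrix_apply, hco] at h
    rw [hmapT, hmapT] at h
    rw [← hA, ← hB, ← hC, ← hD] at h
    linear_combination (norm := noncomm_ring) -h
  have hc4 : Bᵀ * D = Dᵀ * B := by
    have h := congrArg (Complex.ofRealHom.mapMatrix) hr4
    simp only [map_add, _root_.map_mul, map_neg, map_zero, RingHom.mapMatrix_apply, hco] at h
    rw [hmapT, hmapT] at h
    rw [← hB, ← hD] at h
    linear_combination (norm := noncomm_ring) -h
  -- the key identity
  set Zc := Z.map (starRingEnd ℂ) with hZc
  have hZcT : Zcᵀ = Zc := by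
    rw [hZc, ← Matrix.transpose_map, hsymm]
  have hiden : (A * Zc + B)ᵀ * (C * Z + D) - (C * Zc + D)ᵀ * (A * Z + B) = Zc - Z := by
    have expand : (A * Zc + B)ᵀ * (C * Z + D) - (C * Zc + D)ᵀ * (A * Z + B)
        = Zc * (Aᵀ * C - Cᵀ * A) * Z + Zc * (Aᵀ * D - Cᵀ * B) + (Bᵀ * C - Dᵀ * A) * Z
          + (Bᵀ * D - Dᵀ * B) := by
      simp only [Matrix.transpose_add, Matrix.transpose_mul, hZcT]
      noncomm_ring
    rw [expand, hc1, hc2, hc3, hc4]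
    simp only [sub_self, Matrix.mul_zero, Matrix.zero_mul, Matrix.mul_one,
      Matrix.neg_mul, Matrix.one_mul, add_zero, zero_add]
    abel
  -- entrywise: Zc - Z = -2i * Im Z
  set P := Z.map Complex.im with hP
  have hdiff : Zc - Z = (-(2:ℂ) * Complex.I) • (P.map Complex.ofReal) := by
    ext i j
    simp only [Matrix.sub_apply, Matrix.smul_apply, Matrix.map_apply, hZc, hP,
      smul_eq_mul]
    apply Complex.ext <;> simp <;> ring
  -- now the main argument
  rw [Matrix.isUnit_iff_isUnit_det, isUnit_iff_ne_zero]
  intro hdet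
  obtain ⟨v, hvne, hvz⟩ := (Matrix.exists_mulVec_eq_zero_iff).mpr hdet
  -- conjugate matrix fact
  have hstar : (C * Z + D).map (starRingEnd ℂ) = C * Zc + D := by
    ext i j
    simp only [Matrix.map_apply, Matrix.add_apply, Matrix.mul_apply, hZc, hC, hD]
    rw [map_add, map_sum]
    simp [_root_.map_mul, Complex.conj_ofReal]
  have hct : (C * Zc + D)ᵀ = (C * Z + D)ᴴ := by
    rw [← hstar]
    ext i j
    simp [Matrix.conjTranspose_apply, Matrix.transpose_apply, Matrix.map_apply]
  have hzero : star v ⬝ᵥ ((Zc - Z) *ᵥ v) = 0 := by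
    rw [← hiden, Matrix.sub_mulVec, ← Matrix.mulVec_mulVec, ← Matrix.mulVec_mulVec,
      hvz, Matrix.mulVec_zero, hct]
    rw [dotProduct_sub, dotProduct_zero, Matrix.dotProduct_mulVec,
      ← Matrix.star_mulVec, hvz]
    simp
  rw [hdiff] at hzero
  have ht : star v ⬝ᵥ (P.map Complex.ofReal) *ᵥ v = 0 := by
    rw [Matrix.smul_mulVec, dotProduct_smul, smul_eq_mul] at hzero
    have h2 : (-(2:ℂ) * Complex.I) ≠ 0 := by simp [Complex.I_ne_zero]
    exact (mul_eq_zero.mp hzero).resolve_left h2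
  -- real part
  set a : Fin g → ℝ := fun i => (v i).re with ha
  set b : Fin g → ℝ := fun i => (v i).im with hb
  have hre : (star v ⬝ᵥ (P.map Complex.ofReal) *ᵥ v).re = a ⬝ᵥ P *ᵥ a + b ⬝ᵥ P *ᵥ b := by
    simp only [dotProduct, Matrix.mulVec, Matrix.map_apply, Pi.star_apply,
      Finset.mul_sum, Complex.re_sum, ← Finset.sum_add_distrib]
    refine Finset.sum_congr rfl fun i _ => ?_
    refine Finset.sum_congr rfl fun j _ => ?_
    simp only [Complex.star_def, Complex.mul_re, Complex.mul_im, Complex.conj_re,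
      Complex.conj_im, Complex.ofReal_re, Complex.ofReal_im, ha, hb]
    ring
  rw [ht] at hre
  -- positivity
  have hsd := hpos.posSemidef
  have hab : a ≠ 0 ∨ b ≠ 0 := by
    by_contra h
    push_neg at h
    exact hvne (funext fun i => Complex.ext (congrFun h.1 i) (congrFun h.2 i))
  have haa : 0 ≤ a ⬝ᵥ P *ᵥ a := by simpa using hsd.dotProduct_mulVec_nonneg a
  have hbb : 0 ≤ b ⬝ᵥ P *ᵥ b := by simpa using hsd.dotProduct_mulVec_nonneg b
  rcases hab with h | h
  · have := hpos.dotProduct_mulVec_pos (x := a) h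
    simp only [star_trivial] at this
    simp only [Complex.zero_re] at hre
    linarith
  · have := hpos.dotProduct_mulVec_pos (x := b) h
    simp only [star_trivial] at this
    simp only [Complex.zero_re] at hre
    linarith
end
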